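/- arXiv:0803.4209 — 5 statements merged into one kernel-verified Lean document; each statement's English description precedes it below -/
import Mathlib

section
/- Let h = g ∘ f be a composite of functors between groupoids, where f is a fibration that is surjective on objects. If h is a fibration (respectively a discrete fibration), then g is a fibration (respectively a discrete fibration). -/
open CategoryTheory

/-- A functor between groupoids is a *discrete fibration* if every arrow of the
target with source `f.obj x` admits a unique lift with source `x`. -/
def IsDiscreteFibration {H G : Type*} [CategoryTheory.Category H] [CategoryTheory.Category G]
    (f : H ⥤ G) : Prop :=
  ∀ (x : H) (c : G) (a : f.obj x ⟶ c),
    ∃! e : Σ y : H, x ⟶ y,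
      (⟨f.obj e.1, f.map e.2⟩ : Σ d : G, (f.obj x ⟶ d)) = ⟨c, a⟩

/-- A functor between groupoids is a *fibration* if every arrow of the
target with source `f.obj x` admits a (not necessarily unique) lift with source `x`. -/
def IsFibration {H G : Type*} [CategoryTheory.Category H] [CategoryTheory.Category G]
    (f : H ⥤ G) : Prop :=
  ∀ (x : H) (c : G) (a : f.obj x ⟶ c),
    ∃ e : Σ y : H, x ⟶ y,
      (⟨f.obj e.1, f.map e.2⟩ : Σ d : G, (f.obj x ⟶ d)) = ⟨c, a⟩



theorem stmt6 {H G K : Type*} [Groupoid H] [Groupoid G] [Groupoid K]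
    (f : H ⥤ G) (g : G ⥤ K) (h : H ⥤ K) (hcomp : h = f ⋙ g)
    (hf : IsFibration f) (hsurj : Function.Surjective f.obj) :
    (IsFibration h → IsFibration g) ∧
    (IsDiscreteFibration h → IsDiscreteFibration g) := by
  subst hcomp
  constructor
  · intro hh x c a
    obtain ⟨x', rfl⟩ := hsurj x
    obtain ⟨⟨y, u⟩, he⟩ := hh x' c a
    exact ⟨⟨f.obj y, f.map u⟩, he⟩
  · intro hh x c a
    obtain ⟨x', rfl⟩ := hsurj x
    obtain ⟨⟨y, u⟩, he, hu⟩ := hh x' c a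
    refine ⟨⟨f.obj y, f.map u⟩, he, ?_⟩
    rintro ⟨z, v⟩ hv
    obtain ⟨⟨z', v'⟩, he'⟩ := hf x' z v
    have h1 : (⟨(f ⋙ g).obj z', (f ⋙ g).map v'⟩ :
        Σ d : K, ((f ⋙ g).obj x' ⟶ d)) = ⟨c, a⟩ := by
      have := congrArg (fun p : Σ d : G, (f.obj x' ⟶ d) =>
        (⟨g.obj p.1, g.map p.2⟩ : Σ d : K, (g.obj (f.obj x') ⟶ d))) he'
      exact this.trans hv
    have h2 := hu ⟨z', v'⟩ h1
    have h3 := congrArg (fun p : Σ y : H, x' ⟶ y =>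
      (⟨f.obj p.1, f.map p.2⟩ : Σ d : G, (f.obj x' ⟶ d))) h2
    exact he' ▸ h3
end

section
/- A functor f : H ⥤ G between groupoids is faithful if and only if the expansion p : H□ ⥤ G of its holograph is faithful, and f is essentially surjective if and only if p is surjective on objects. -/
open CategoryTheory

theorem stmt13 {H G : Type*} [Groupoid H] [Groupoid G] (f : H ⥤ G) :
    (f.Faithful ↔ (Comma.snd f (𝟭 G)).Faithful) ∧
    (f.EssSurj ↔ Function.Surjective (Comma.snd f (𝟭 G)).obj) := by
  constructor
  · constructor
    · intro hf
      constructor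
      intro X Y u v huv
      simp only [Comma.snd_map] at huv
      ext
      · -- left components equal
        apply hf.map_injective
        have hu := u.w
        have hv := v.w
        simp only [Functor.id_map] at hu hv
        have : f.map u.left = X.hom ≫ u.right ≫ inv Y.hom := by
          rw [← Category.assoc, IsIso.eq_comp_inv]; exact hu
        have h2 : f.map v.left = X.hom ≫ v.right ≫ inv Y.hom := by
          rw [← Category.assoc, IsIso.eq_comp_inv]; exact hv
        rw [this, h2, huv]
      · exact huv
    · intro hp
      constructor
      intro x y u v huv
      let A : Comma f (𝟭 G) := ⟨x, f.obj x, 𝟙 _⟩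
      let B : Comma f (𝟭 G) := ⟨y, f.obj y, 𝟙 _⟩
      let U : A ⟶ B := ⟨u, f.map u, by simp [A, B]⟩
      let V : A ⟶ B := ⟨v, f.map v, by simp [A, B, huv]⟩
      have : U = V := hp.map_injective (by simpa [U, V] using huv)
      have := congrArg CommaMorphism.left this
      simpa [U, V] using this
  · constructor
    · intro hf
      intro g
      obtain ⟨x, ⟨e⟩⟩ := hf.mem_essImage g
      exact ⟨⟨x, g, e.hom⟩, rfl⟩
    · intro hs
      constructor
      intro g
      obtain ⟨X, hX⟩ := hs g
      exact ⟨X.left, ⟨asIso X.hom |>.trans (eqToIso hX)⟩⟩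
end

section
/- A functor f : H ⥤ G between groupoids is an equivalence of categories if and only if the expansion p : H□ ⥤ G of its holograph is an equivalence of categories. -/
/-!
The holograph `H□` is the comma category `f ↓ 𝟭 G`. Since `G` is a groupoid, every object
`(x, a)` of `H□` is isomorphic to `(x, 𝟙 (f x))`, so the projection `H□ ⥤ H` is an equivalence;
moreover the structure maps `a` assemble into a natural isomorphism between `p` and this
projection followed by `f`. Two-out-of-three for equivalences then shows that `p` is an
equivalence exactly when `f` is.
-/

open CategoryTheory

namespace CategoryTheory.Comma

section

variable {A B T : Type*} [Category A] [Category B] [Groupoid T] (L : A ⥤ T) (R : B ⥤ T)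

noncomputable def fstCompIsoSndComp : fst L R ⋙ L ≅ snd L R ⋙ R :=
  NatIso.ofComponents (fun X => asIso X.hom) (fun g => by simp)

end

variable {H G : Type*} [Category H] [Groupoid G] (f : H ⥤ G)

noncomputable def fstIdEquivalence : Comma f (𝟭 G) ≌ H where
  functor := fst f (𝟭 G)
  inverse :=
    { obj := fun x => ⟨x, f.obj x, 𝟙 _⟩
      map := fun h => ⟨h, f.map h, by simp⟩ }
  unitIso := NatIso.ofComponents
    (fun X => isoMk (Iso.refl _) (asIso X.hom).symm (by simp))
    (fun g => by ext <;> simp [← Category.assoc, IsIso.comp_inv_eq])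
  counitIso := Iso.refl _

instance isEquivalence_fst_id : (fst f (𝟭 G)).IsEquivalence :=
  (fstIdEquivalence f).isEquivalence_functor

end CategoryTheory.Comma

open Comma in
theorem stmt14 {H G : Type*} [Groupoid H] [Groupoid G] (f : H ⥤ G) :
    f.IsEquivalence ↔ (Comma.snd f (𝟭 G)).IsEquivalence := by
  rw [← Functor.isEquivalence_iff_of_iso
    (fstCompIsoSndComp f (𝟭 G) ≪≫ (snd f (𝟭 G)).rightUnitor)]
  exact ⟨fun _ => inferInstance, fun _ => Functor.isEquivalence_of_comp_left (fst f (𝟭 G)) f⟩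
end

section
/- Consider a commutative square of functors between groupoids a ∘ e' = e ∘ a' where a and a' are discrete fibrations, e' is an equivalence, and e is an equivalence surjective on objects. Then the square is a pullback in the following sense: the induced functor from the source of e' and a' to the strict pullback groupoid (objects: pairs of objects with equal image, morphisms: pairs of morphisms with equal image) is an isomorphism of groupoids. -/
open CategoryTheory

lemma sigma_hom_eq {C : Type*} [Category C] {s c c' : C} {f : s ⟶ c} {g : s ⟶ c'}
    (h : (⟨c, f⟩ : Σ d, s ⟶ d) = ⟨c', g⟩) :
    ∃ p : c = c', f = g ≫ eqToHom p.symm := by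
  injection h with h1 h2
  subst h1
  exact ⟨rfl, by simpa using eq_of_heq h2⟩

lemma hom_eq_sigma {C : Type*} [Category C] {s c c' : C} {f : s ⟶ c} {g : s ⟶ c'}
    (p : c = c') (h : f ≫ eqToHom p = g) :
    (⟨c, f⟩ : Σ d, s ⟶ d) = ⟨c', g⟩ := by
  subst p; simp at h; subst h; rfl

theorem stmt17 {H' H G' G : Type*} [Groupoid H'] [Groupoid H] [Groupoid G'] [Groupoid G]
    (e' : H' ⥤ H) (a : H ⥤ G) (a' : H' ⥤ G') (e : G' ⥤ G)
    (hcomm : e' ⋙ a = a' ⋙ e)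
    (ha : IsDiscreteFibration a) (ha' : IsDiscreteFibration a')
    (he' : e'.IsEquivalence) (he : e.IsEquivalence)
    (hesurj : Function.Surjective e.obj) :
    Function.Bijective (fun x : H' =>
      (⟨(e'.obj x, a'.obj x), Functor.congr_obj hcomm x⟩ :
        {p : H × G' // a.obj p.1 = e.obj p.2})) ∧
    ∀ x y : H', Function.Bijective (fun h : (x ⟶ y) =>
      (⟨(e'.map h, a'.map h), Functor.congr_hom hcomm h⟩ :
        {q : (e'.obj x ⟶ e'.obj y) × (a'.obj x ⟶ a'.obj y) //
          a.map q.1 = eqToHom (Functor.congr_obj hcomm x) ≫ e.map q.2 ≫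
            eqToHom (Functor.congr_obj hcomm y).symm})) := by
  haveI := he'
  haveI := he
  -- abbreviations for the commutation data
  have c0 : ∀ u : H', a.obj (e'.obj u) = e.obj (a'.obj u) := fun u =>
    Functor.congr_obj hcomm u
  have hc0 : ∀ {u v : H'} (h : u ⟶ v),
      a.map (e'.map h) = eqToHom (c0 u) ≫ e.map (a'.map h) ≫ eqToHom (c0 v).symm :=
    fun {u v} h => Functor.congr_hom hcomm h
  have hc1 : ∀ {u v : H'} (h : u ⟶ v),
      e.map (a'.map h) = eqToHom (c0 u).symm ≫ a.map (e'.map h) ≫ eqToHom (c0 v) := by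
    intro u v h
    rw [hc0 h]; simp
  constructor
  · constructor
    · -- injective on objects
      intro x₁ x₂ hx
      have h1 : e'.obj x₁ = e'.obj x₂ := congrArg (fun p => p.1.1) hx
      have h2 : a'.obj x₁ = a'.obj x₂ := congrArg (fun p => p.1.2) hx
      set h : x₁ ⟶ x₂ := e'.preimage (eqToHom h1) with hh
      have hmap : e'.map h = eqToHom h1 := e'.map_preimage _
      have ham : a'.map h = eqToHom h2 := e.map_injective (by
        rw [hc1 h, hmap]
        simp [eqToHom_map])
      have hu := (ha' x₁ (a'.obj x₁) (𝟙 _)).unique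
        (y₁ := ⟨x₂, h⟩) (y₂ := ⟨x₁, 𝟙 x₁⟩)
        (by rw [ham]; exact hom_eq_sigma h2.symm (by simp))
        (by simp)
      exact (congrArg Sigma.fst hu).symm
    · -- surjective on objects
      rintro ⟨⟨x, y⟩, hp⟩
      dsimp only at hp
      obtain ⟨z, ⟨φ⟩⟩ := Functor.EssSurj.mem_essImage (F := e') x
      set ψ : a'.obj z ⟶ y :=
        e.preimage (eqToHom (c0 z).symm ≫ a.map φ.hom ≫ eqToHom hp) with hψdef
      have hψe : e.map ψ = eqToHom (c0 z).symm ≫ a.map φ.hom ≫ eqToHom hp :=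
        e.map_preimage _
      obtain ⟨⟨z', h⟩, hz, -⟩ := ha' z y ψ
      obtain ⟨p1, p2⟩ := sigma_hom_eq hz
      dsimp only at p1 p2
      have q : a.obj (e'.obj z') = a.obj x := by rw [c0 z', p1, ← hp]
      have hu := (ha (e'.obj z) (a.obj x) (a.map φ.hom)).unique
        (y₁ := ⟨e'.obj z', e'.map h⟩) (y₂ := ⟨x, φ.hom⟩)
        (by
          refine hom_eq_sigma q ?_
          dsimp only
          rw [hc0 h, p2]
          simp [hψe, eqToHom_map])
        rfl
      have hz'x : e'.obj z' = x := congrArg Sigma.fst hu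
      exact ⟨z', Subtype.ext (Prod.ext hz'x p1)⟩
  · -- homs
    intro x y
    constructor
    · intro h₁ h₂ heq
      exact e'.map_injective (congrArg (fun q => q.1.1) heq)
    · rintro ⟨⟨k, ψ⟩, hq⟩
      dsimp only at hq
      refine ⟨e'.preimage k, ?_⟩
      have hk : e'.map (e'.preimage k) = k := e'.map_preimage _
      have hψ : a'.map (e'.preimage k) = ψ := e.map_injective (by
        rw [hc1 _, hk, hq]
        simp)
      exact Subtype.ext (Prod.ext hk hψ)
end

section
/- Let p : K ⥤ G be a fibration between groupoids with kernel N (the wide subgroupoid of arrows sent to identities), and let M be a wide subgroupoid of K with inclusion i. Then p ∘ i is a discrete fibration if and only if for every arrow k of K there exist unique arrows m ∈ M and n ∈ N with k = m ∘ n. -/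
open CategoryTheory

/-- An arrow belongs to the *kernel* of a functor if it is sent to an identity arrow. -/
def InKer {K G : Type*} [CategoryTheory.Category K] [CategoryTheory.Category G]
    (p : K ⥤ G) {x y : K} (k : x ⟶ y) : Prop :=
  (⟨p.obj y, p.map k⟩ : Σ c : G, (p.obj x ⟶ c)) = ⟨p.obj x, 𝟙 (p.obj x)⟩


/-!
A factorization `k = n ≫ m` of `k : x ⟶ y` with `n` in the kernel and `m ∈ M` is determined by
`m⁻¹ : y ⟶ z`, which is an `M`-arrow lying over `p k⁻¹`; conversely such an `M`-arrow `m'` gives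
the factorization `k = (k ≫ m') ≫ m'⁻¹`. So factorizations of `k` are exactly the `M`-lifts of
`p k⁻¹` at `y`. This gives the forward direction at once; for the converse, lift an arrow `a` of
`G` to some `k` using that `p` is a fibration, and read the `M`-lifts of `a = p k` off the
factorizations of `k⁻¹`.
-/

namespace CategoryTheory

variable {C : Type*} [Category C]

def precompSigma {a b : C} (g : a ⟶ b) (e : Σ d : C, b ⟶ d) : Σ d : C, a ⟶ d :=
  ⟨e.1, g ≫ e.2⟩

@[simp]
lemma precompSigma_mk {a b d : C} (g : a ⟶ b) (f : b ⟶ d) :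
    precompSigma g ⟨d, f⟩ = ⟨d, g ≫ f⟩ := rfl

variable {K : Type*} [Groupoid K] {G : Type*} [Category G]

def kerFactorizationEquiv (p : K ⥤ G) (M : Subgroupoid K) {x y : K} (k : x ⟶ y) :
    {t : Σ z : K, (x ⟶ z) × (z ⟶ y) //
        InKer p t.2.1 ∧ t.2.2 ∈ M.arrows t.1 y ∧ t.2.1 ≫ t.2.2 = k} ≃
      {e : Σ z : K, y ⟶ z // e.2 ∈ M.arrows y e.1 ∧
        (⟨p.obj e.1, p.map e.2⟩ : Σ d : G, (p.obj y ⟶ d)) =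
          ⟨p.obj x, p.map (Groupoid.inv k)⟩} where
  toFun t := ⟨⟨t.1.1, Groupoid.inv t.1.2.2⟩, M.inv t.2.2.1, by
    obtain ⟨⟨z, n, m⟩, hn, -, rfl⟩ := t
    simpa [InKer, ← Functor.map_comp] using
      congrArg (precompSigma (p.map (Groupoid.inv (n ≫ m)))) hn⟩
  invFun e := ⟨⟨e.1.1, k ≫ e.1.2, Groupoid.inv e.1.2⟩, by
    obtain ⟨⟨z, m⟩, -, hm⟩ := e
    simpa [InKer, ← Functor.map_comp] using congrArg (precompSigma (p.map k)) hm,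
    M.inv e.2.1, by simp⟩
  left_inv := by
    rintro ⟨⟨z, n, m⟩, -, -, rfl⟩
    simp
  right_inv := by
    rintro ⟨⟨z, m⟩, -, -⟩
    simp

end CategoryTheory

theorem stmt18_general {K G : Type*} [Groupoid K] [Groupoid G] (p : K ⥤ G)
    (hp : IsFibration p) (M : Subgroupoid K) :
    (∀ (x : K) (c : G) (a : p.obj x ⟶ c),
        ∃! e : Σ y : K, x ⟶ y,
          e.2 ∈ M.arrows x e.1 ∧
          (⟨p.obj e.1, p.map e.2⟩ : Σ d : G, (p.obj x ⟶ d)) = ⟨c, a⟩) ↔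
    (∀ {x y : K} (k : x ⟶ y),
        ∃! t : Σ z : K, (x ⟶ z) × (z ⟶ y),
          InKer p t.2.1 ∧ t.2.2 ∈ M.arrows t.1 y ∧ t.2.1 ≫ t.2.2 = k) := by
  refine ⟨fun hlift x y k => ?_, fun hfact x c a => ?_⟩
  · exact (kerFactorizationEquiv p M k).existsUnique_subtype_congr.mpr
      (hlift y (p.obj x) (p.map (Groupoid.inv k)))
  · obtain ⟨⟨y, k⟩, hk⟩ := hp x c a
    rw [← hk]
    simpa using (kerFactorizationEquiv p M (Groupoid.inv k)).existsUnique_subtype_congr.mp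
      (hfact (Groupoid.inv k))

theorem stmt18 {K G : Type*} [Groupoid K] [Groupoid G] (p : K ⥤ G)
    (hp : IsFibration p) (M : Subgroupoid K) (hM : M.IsWide) :
    (∀ (x : K) (c : G) (a : p.obj x ⟶ c),
        ∃! e : Σ y : K, x ⟶ y,
          e.2 ∈ M.arrows x e.1 ∧
          (⟨p.obj e.1, p.map e.2⟩ : Σ d : G, (p.obj x ⟶ d)) = ⟨c, a⟩) ↔
    (∀ {x y : K} (k : x ⟶ y),
        ∃! t : Σ z : K, (x ⟶ z) × (z ⟶ y),
          InKer p t.2.1 ∧ t.2.2 ∈ M.arrows t.1 y ∧ t.2.1 ≫ t.2.2 = k) :=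
  stmt18_general p hp M
end
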